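/- Let R be a commutative ring, S a multiplicative subset of R, and 0 → A →f B →g C → 0 a short u-S-exact sequence of R-modules. If an R-module M is u-S-projective (resp. u-S-injective) relative to B, then M is u-S-projective (resp. u-S-injective) relative to both A and C. -/

import Mathlib

universe u v w

variable (R : Type u) [CommRing R]

/-- An `R`-module `T` is uniformly `S`-torsion if there is `s ∈ S` with `s • T = 0`. -/
def IsUSTorsion (S : Submonoid R) (T : Type*) [AddCommGroup T] [Module R T] : Prop :=
  ∃ s ∈ S, ∀ t : T, s • t = 0

/-- `f` is a `u`-`S`-epimorphism if its cokernel is uniformly `S`-torsion. -/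
def IsUSEpi (S : Submonoid R) {M N : Type*} [AddCommGroup M] [Module R M]
    [AddCommGroup N] [Module R N] (f : M →ₗ[R] N) : Prop :=
  IsUSTorsion R S (N ⧸ LinearMap.range f)

/-- `f` is a `u`-`S`-monomorphism if its kernel is uniformly `S`-torsion. -/
def IsUSMono (S : Submonoid R) {M N : Type*} [AddCommGroup M] [Module R M]
    [AddCommGroup N] [Module R N] (f : M →ₗ[R] N) : Prop :=
  IsUSTorsion R S (LinearMap.ker f)

/-- `P` is `u`-`S`-projective relative to `M` if for every `u`-`S`-epimorphism
`f : M → N`, the induced map `Hom(P,M) → Hom(P,N)` is a `u`-`S`-epimorphism. -/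
def IsUSProjRel (S : Submonoid R) (P : Type w) [AddCommGroup P] [Module R P]
    (M : Type v) [AddCommGroup M] [Module R M] : Prop :=
  ∀ (N : Type v) [AddCommGroup N] [Module R N] (f : M →ₗ[R] N),
    IsUSEpi R S f → IsUSEpi R S (LinearMap.llcomp (σ₁₂ := RingHom.id R) (σ₂₃ := RingHom.id R)
      (σ₁₃ := RingHom.id R) R P M N f)

/-- `E` is `u`-`S`-injective relative to `M` if for every `u`-`S`-monomorphism
`f : K → M`, the induced map `Hom(M,E) → Hom(K,E)` is a `u`-`S`-epimorphism. -/
def IsUSInjRel (S : Submonoid R) (E : Type w) [AddCommGroup E] [Module R E]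
    (M : Type v) [AddCommGroup M] [Module R M] : Prop :=
  ∀ (K : Type v) [AddCommGroup K] [Module R K] (f : K →ₗ[R] M),
    IsUSMono R S f → IsUSEpi R S (LinearMap.lcomp R E f)

lemma isUSEpi_iff (S : Submonoid R) {M N : Type*} [AddCommGroup M] [Module R M]
    [AddCommGroup N] [Module R N] (f : M →ₗ[R] N) :
    IsUSEpi R S f ↔ ∃ s ∈ S, ∀ n : N, s • n ∈ LinearMap.range f := by
  constructor
  · rintro ⟨s, hs, h⟩
    refine ⟨s, hs, fun n => ?_⟩
    have := h (Submodule.Quotient.mk n)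
    rwa [← Submodule.Quotient.mk_smul, Submodule.Quotient.mk_eq_zero] at this
  · rintro ⟨s, hs, h⟩
    refine ⟨s, hs, fun t => ?_⟩
    obtain ⟨n, rfl⟩ := Submodule.Quotient.mk_surjective _ t
    rw [← Submodule.Quotient.mk_smul, Submodule.Quotient.mk_eq_zero]
    exact h n

lemma isUSMono_iff (S : Submonoid R) {M N : Type*} [AddCommGroup M] [Module R M]
    [AddCommGroup N] [Module R N] (f : M →ₗ[R] N) :
    IsUSMono R S f ↔ ∃ s ∈ S, ∀ m : M, f m = 0 → s • m = 0 := by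
  constructor
  · rintro ⟨s, hs, h⟩
    refine ⟨s, hs, fun m hm => ?_⟩
    have := h ⟨m, hm⟩
    have := congrArg (Subtype.val) this
    simpa using this
  · rintro ⟨s, hs, h⟩
    refine ⟨s, hs, fun t => ?_⟩
    apply Subtype.ext
    simpa using h t.1 t.2

/-- Lifting along a surjection whose kernel is killed by `s`. -/
lemma lift_of_surjective {X Y M : Type*} [AddCommGroup X] [Module R X]
    [AddCommGroup Y] [Module R Y] [AddCommGroup M] [Module R M]
    (p : X →ₗ[R] Y) (hp : Function.Surjective p) (s : R)
    (hker : ∀ x, p x = 0 → s • x = 0) (δ : M →ₗ[R] Y) :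
    ∃ γ : M →ₗ[R] X, ∀ m, p (γ m) = s • δ m := by
  classical
  let u : Y → X := Function.surjInv hp
  have hu : ∀ y, p (u y) = y := Function.surjInv_eq hp
  refine ⟨{ toFun := fun m => s • u (δ m),
            map_add' := ?_, map_smul' := ?_ }, fun m => by
              show p (s • u (δ m)) = s • δ m
              rw [map_smul, hu]⟩
  · intro a b
    have h0 : p (u (δ (a + b)) - u (δ a) - u (δ b)) = 0 := by
      simp [map_sub, hu, map_add]
    have h1 := hker _ h0
    rw [smul_sub, smul_sub, sub_sub, sub_eq_zero] at h1
    simpa using h1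
  · intro r m
    have h0 : p (u (δ (r • m)) - r • u (δ m)) = 0 := by
      simp [map_sub, map_smul, hu]
    have h1 := hker _ h0
    rw [smul_sub, sub_eq_zero] at h1
    simpa [smul_comm s r] using h1

theorem stmt12 (S : Submonoid R) (hS : (0 : R) ∉ S)
    (A B C : Type v)
    [AddCommGroup A] [Module R A] [AddCommGroup B] [Module R B]
    [AddCommGroup C] [Module R C]
    (f : A →ₗ[R] B) (g : B →ₗ[R] C)
    (hf : IsUSMono R S f) (hg : IsUSEpi R S g)
    (hmid : ∃ s ∈ S, (∀ x ∈ LinearMap.ker g, s • x ∈ LinearMap.range f) ∧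
        (∀ x ∈ LinearMap.range f, s • x ∈ LinearMap.ker g))
    (M : Type w) [AddCommGroup M] [Module R M] :
    (IsUSProjRel R S M B → IsUSProjRel R S M A ∧ IsUSProjRel R S M C) ∧
    (IsUSInjRel R S M B → IsUSInjRel R S M A ∧ IsUSInjRel R S M C) := by
  obtain ⟨sf, hsfS, hsf⟩ := (isUSMono_iff R S f).mp hf
  obtain ⟨sg, hsgS, hsg⟩ := (isUSEpi_iff R S g).mp hg
  constructor
  · intro hproj
    constructor
    · -- u-S-projective relative to A, via the pushout of f and h
      intro N _ _ h hh
      obtain ⟨sh, hshS, hsh⟩ := (isUSEpi_iff R S h).mp hh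
      set l : A →ₗ[R] B × N := LinearMap.prod f (-h) with hl
      set Q : Submodule R (B × N) := LinearMap.range l with hQ
      set j : B →ₗ[R] (B × N) ⧸ Q := Q.mkQ ∘ₗ LinearMap.inl R B N with hj
      set k : N →ₗ[R] (B × N) ⧸ Q := Q.mkQ ∘ₗ LinearMap.inr R B N with hk
      have hla : ∀ a : A, l a = (f a, -h a) := fun a => rfl
      have hk0 : ∀ n : N, k n = 0 → sf • n = 0 := by
        intro n hn
        rw [hk, LinearMap.comp_apply] at hn
        rw [Submodule.mkQ_apply, Submodule.Quotient.mk_eq_zero] at hn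
        obtain ⟨a, ha⟩ := hn
        rw [hla] at ha
        have ha1 : f a = 0 := (Prod.ext_iff.mp ha).1
        have ha2 : -h a = n := (Prod.ext_iff.mp ha).2
        have := hsf a ha1
        calc sf • n = sf • (-h a) := by rw [ha2]
          _ = -h (sf • a) := by rw [map_smul, smul_neg]
          _ = 0 := by rw [this, map_zero, neg_zero]
      have hjepi : IsUSEpi R S j := by
        rw [isUSEpi_iff]
        refine ⟨sh, hshS, fun d => ?_⟩
        obtain ⟨⟨b, n⟩, rfl⟩ := Submodule.Quotient.mk_surjective Q d
        obtain ⟨a, ha⟩ := hsh n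
        refine ⟨sh • b + f a, ?_⟩
        rw [hj, LinearMap.comp_apply, Submodule.mkQ_apply, ← Submodule.Quotient.mk_smul,
          Submodule.Quotient.eq]
        refine ⟨a, ?_⟩
        rw [hla]
        have : (sh • (b, n) : B × N) = (sh • b, sh • n) := rfl
        rw [this]
        ext
        · simp
        · simp [ha]
      obtain ⟨t, htS, ht⟩ := (isUSEpi_iff R S _).mp (hproj _ j hjepi)
      rw [isUSEpi_iff]
      refine ⟨sf * (sf * t), mul_mem hsfS (mul_mem hsfS htS), fun α => ?_⟩
      obtain ⟨β, hβ⟩ := ht (k ∘ₗ α)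
      have hβ' : ∀ m, j (β m) = t • k (α m) := by
        intro m
        have := congrArg (fun φ : M →ₗ[R] (B × N) ⧸ Q => φ m) hβ
        simpa using this
      have hpt : ∀ m, β m ∈ LinearMap.range f := by
        intro m
        have h1 := hβ' m
        rw [hj, hk, LinearMap.comp_apply, LinearMap.comp_apply, Submodule.mkQ_apply,
          Submodule.mkQ_apply, ← Submodule.Quotient.mk_smul, Submodule.Quotient.eq] at h1
        obtain ⟨a, ha⟩ := h1
        rw [hla] at ha
        have : (t • ((0 : B), α m) : B × N) = (0, t • α m) := by
          ext <;> simp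
        rw [LinearMap.inl_apply, LinearMap.inr_apply, this] at ha
        have ha1 : f a = β m - 0 := (Prod.ext_iff.mp ha).1
        exact ⟨a, by simpa using ha1⟩
      obtain ⟨γ, hγ⟩ := lift_of_surjective R f.rangeRestrict f.surjective_rangeRestrict sf
        (fun a ha => by
          have : f a = 0 := by
            have := congrArg Subtype.val ha
            simpa using this
          exact hsf a this)
        (LinearMap.codRestrict _ β hpt)
      have hγ' : ∀ m, f (γ m) = sf • β m := by
        intro m
        have := congrArg Subtype.val (hγ m)
        simpa using this
      refine ⟨sf • γ, ?_⟩
      ext m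
      have hjf : ∀ a : A, j (f a) = k (h a) := by
        intro a
        rw [hj, hk, LinearMap.comp_apply, LinearMap.comp_apply, Submodule.mkQ_apply,
          Submodule.mkQ_apply, Submodule.Quotient.eq]
        exact ⟨a, by rw [hla]; ext <;> simp⟩
      have key : k (h (γ m) - (sf * t) • α m) = 0 := by
        have e1 : k (h (γ m)) = (sf * t) • k (α m) := by
          rw [← hjf, hγ', map_smul, hβ' m, smul_smul]
        rw [map_sub, e1, map_smul, sub_self]
      have key2 := hk0 _ key
      rw [smul_sub, sub_eq_zero, smul_smul] at key2
      have : h (sf • γ m) = (sf * (sf * t)) • α m := by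
        rw [map_smul, key2]
      simpa using this
    · -- u-S-projective relative to C
      intro N _ _ e he
      obtain ⟨se, hseS, hse⟩ := (isUSEpi_iff R S e).mp he
      have hcomp : IsUSEpi R S (e ∘ₗ g) := by
        rw [isUSEpi_iff]
        refine ⟨sg * se, mul_mem hsgS hseS, fun n => ?_⟩
        obtain ⟨c, hc⟩ := hse n
        obtain ⟨b, hb⟩ := hsg c
        refine ⟨b, ?_⟩
        rw [LinearMap.comp_apply, hb, map_smul, hc, smul_smul]
      obtain ⟨t, htS, ht⟩ := (isUSEpi_iff R S _).mp (hproj N (e ∘ₗ g) hcomp)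
      rw [isUSEpi_iff]
      refine ⟨t, htS, fun α => ?_⟩
      obtain ⟨β, hβ⟩ := ht α
      refine ⟨g ∘ₗ β, ?_⟩
      ext m
      have := congrArg (fun φ : M →ₗ[R] N => φ m) hβ
      simpa using this
  · intro hinj
    constructor
    · -- u-S-injective relative to A
      intro K _ _ i hi
      obtain ⟨si, hsiS, hsi⟩ := (isUSMono_iff R S i).mp hi
      have hcomp : IsUSMono R S (f ∘ₗ i) := by
        rw [isUSMono_iff]
        refine ⟨si * sf, mul_mem hsiS hsfS, fun x hx => ?_⟩
        rw [LinearMap.comp_apply] at hx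
        have h1 := hsf _ hx
        rw [← map_smul] at h1
        have h2 := hsi _ h1
        rw [smul_smul] at h2
        exact h2
      obtain ⟨t, htS, ht⟩ := (isUSEpi_iff R S _).mp (hinj K (f ∘ₗ i) hcomp)
      rw [isUSEpi_iff]
      refine ⟨t, htS, fun α => ?_⟩
      obtain ⟨β, hβ⟩ := ht α
      refine ⟨β ∘ₗ f, ?_⟩
      ext x
      have := congrArg (fun φ : K →ₗ[R] M => φ x) hβ
      simpa using this
    · -- u-S-injective relative to C, via the pullback of g and i
      intro K _ _ i hi
      obtain ⟨si, hsiS, hsi⟩ := (isUSMono_iff R S i).mp hi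
      set P : Submodule R (B × K) :=
        LinearMap.ker ((g ∘ₗ LinearMap.fst R B K) - (i ∘ₗ LinearMap.snd R B K)) with hP
      have hmemP : ∀ x : B × K, x ∈ P ↔ g x.1 = i x.2 := by
        intro x
        rw [hP, LinearMap.mem_ker, LinearMap.sub_apply, LinearMap.comp_apply,
          LinearMap.comp_apply, sub_eq_zero]
        rfl
      set πB : P →ₗ[R] B := LinearMap.fst R B K ∘ₗ P.subtype with hπB
      have hπBmono : IsUSMono R S πB := by
        rw [isUSMono_iff]
        refine ⟨si, hsiS, fun x hx => ?_⟩
        have hx1 : (x : B × K).1 = 0 := hx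
        have hx2 : i (x : B × K).2 = 0 := by
          have := (hmemP (x : B × K)).mp x.2
          rw [hx1, map_zero] at this
          exact this.symm
        have := hsi _ hx2
        apply Subtype.ext
        have : (si • (x : B × K)) = 0 := by
          ext
          · simp [hx1]
          · simpa using this
        simpa using this
      obtain ⟨t, htS, ht⟩ := (isUSEpi_iff R S _).mp (hinj (↥P) πB hπBmono)
      rw [isUSEpi_iff]
      refine ⟨t * sg, mul_mem htS hsgS, fun α => ?_⟩
      obtain ⟨β, hβ⟩ := ht (α ∘ₗ (LinearMap.snd R B K ∘ₗ P.subtype))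
      have hβ' : ∀ x : P, β ((x : B × K).1) = t • α ((x : B × K).2) := by
        intro x
        have := congrArg (fun φ : P →ₗ[R] M => φ x) hβ
        simpa [hπB] using this
      have hkerβ : LinearMap.ker g ≤ LinearMap.ker β := by
        intro b hb
        rw [LinearMap.mem_ker] at hb ⊢
        have hmem : ((b, 0) : B × K) ∈ P := by
          rw [hmemP]; simp [hb]
        have := hβ' ⟨(b, 0), hmem⟩
        simpa using this
      set μ : C →ₗ[R] LinearMap.range g :=
        LinearMap.codRestrict _ (sg • LinearMap.id) (fun c => by simpa using hsg c) with hμ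
      set δ : C →ₗ[R] M :=
        (Submodule.liftQ (LinearMap.ker g) β hkerβ) ∘ₗ
          (((LinearMap.quotKerEquivRange g).symm :
              LinearMap.range g ≃ₗ[R] B ⧸ LinearMap.ker g) : LinearMap.range g →ₗ[R] B ⧸ LinearMap.ker g) ∘ₗ μ
        with hδ
      refine ⟨δ, ?_⟩
      ext x
      obtain ⟨b, hb⟩ := hsg (i x)
      have hμx : μ (i x) = ⟨sg • i x, by simpa using hsg (i x)⟩ := by
        apply Subtype.ext
        simp [hμ]
      have hsymm : (LinearMap.quotKerEquivRange g).symm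
          (⟨sg • i x, by simpa using hsg (i x)⟩ : LinearMap.range g) =
          Submodule.Quotient.mk b := by
        rw [LinearEquiv.symm_apply_eq]
        exact Subtype.ext (by
          rw [LinearMap.quotKerEquivRange_apply_mk]
          exact hb.symm)
      have hmem2 : ((b, sg • x) : B × K) ∈ P := by
        rw [hmemP]
        simpa [map_smul] using hb
      have hβb : β b = (t * sg) • α x := by
        have := hβ' ⟨(b, sg • x), hmem2⟩
        simpa [map_smul, smul_smul] using this
      have : δ (i x) = (t * sg) • α x := by
        rw [hδ, LinearMap.comp_apply, LinearMap.comp_apply, hμx, LinearEquiv.coe_coe, hsymm,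
          Submodule.liftQ_apply, hβb]
      simpa using this
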